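/- Under the assumptions of the penalized loss L_{X,y}(f) = g(SSR_{X,y}(f)) + PEN((coeff_d f)_{d∈G}) with G a set of maximal exponent vectors of the model support I, suppose the family F of admissible polynomials (those with support in I) is closed under translations, i.e., f ∈ F and P ∈ ℝ^p implies T_P(f) ∈ F. If f* minimizes L_{X,y} over F, then T_{−P}(f*) minimizes L_{T_P(X), y} over F, and the resulting fitted function is unchanged: (T_{−P}(f*))(x + P) = f*(x) for all x ∈ ℝ^p. -/

import Mathlib

open MvPolynomial

/-- Translation of a polynomial: substitution `X i ↦ X i + C (P i)`. -/
noncomputable def T {p : ℕ} (P : Fin p → ℝ) :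
    MvPolynomial (Fin p) ℝ →ₐ[ℝ] MvPolynomial (Fin p) ℝ :=
  aeval (fun i => X i + C (P i))

/-- Sum of squared residuals. -/
noncomputable def SSR {n p : ℕ} (X : Fin n → Fin p → ℝ) (y : Fin n → ℝ)
    (f : MvPolynomial (Fin p) ℝ) : ℝ :=
  ∑ j, (y j - eval (X j) f) ^ 2

/-! Translating the variables, `X ↦ X + Q`, sends a monomial `X^e` to `X^e` plus terms `X^d` with
`d < e` componentwise. Hence coefficients at exponents that are maximal in `I` are unchanged by
translation, and so is the penalty. Since `SSR_{X+P,y}(f) = SSR_{X,y}(T_P f)` and `T_P` is a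
bijection of `F` with inverse `T_{-P}`, the minimization problems for `X` and `X + P` correspond. -/

section TopExponent

variable {σ R : Type*} [CommSemiring R] {p q : MvPolynomial σ R} {a b : σ →₀ ℕ}

theorem support_mul_subset_Iic (hp : ↑p.support ⊆ Set.Iic a) (hq : ↑q.support ⊆ Set.Iic b) :
    ↑(p * q).support ⊆ Set.Iic (a + b) := by
  classical
  intro d hd
  obtain ⟨x, hx, y, hy, rfl⟩ := Finset.mem_add.mp (support_mul p q hd)
  exact add_le_add (Set.mem_Iic.mp (hp hx)) (Set.mem_Iic.mp (hq hy))

theorem coeff_add_mul_of_support_subset_Iic (hp : ↑p.support ⊆ Set.Iic a)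
    (hq : ↑q.support ⊆ Set.Iic b) : coeff (a + b) (p * q) = coeff a p * coeff b q := by
  classical
  rw [coeff_mul, Finset.sum_eq_single (a, b)]
  · rintro ⟨x, y⟩ hxy hne
    by_contra h
    have hx : x ≤ a := hp (mem_support_iff.mpr (left_ne_zero_of_mul h))
    have hy : y ≤ b := hq (mem_support_iff.mpr (right_ne_zero_of_mul h))
    exact hne (Prod.ext_iff.mpr ((add_eq_add_iff_eq_and_eq hx hy).mp
      (Finset.HasAntidiagonal.mem_antidiagonal.mp hxy)))
  · simp

theorem support_prod_subset_Iic {ι : Type*} (s : Finset ι) {f : ι → MvPolynomial σ R}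
    {e : ι → σ →₀ ℕ} (h : ∀ i ∈ s, ↑(f i).support ⊆ Set.Iic (e i)) :
    ↑(∏ i ∈ s, f i).support ⊆ Set.Iic (∑ i ∈ s, e i) := by
  induction s using Finset.cons_induction with
  | empty =>
    classical
    intro d hd
    have : 0 = d ∧ (1 : R) ≠ 0 := by simpa [coeff_one] using mem_support_iff.mp hd
    simp [← this.1]
  | cons i s hi ih =>
    rw [Finset.prod_cons, Finset.sum_cons]
    exact support_mul_subset_Iic (h i (Finset.mem_cons_self i s))
      (ih fun j hj => h j (Finset.mem_cons_of_mem hj))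

theorem coeff_sum_prod_of_support_subset_Iic {ι : Type*} (s : Finset ι)
    {f : ι → MvPolynomial σ R} {e : ι → σ →₀ ℕ} (h : ∀ i ∈ s, ↑(f i).support ⊆ Set.Iic (e i)) :
    coeff (∑ i ∈ s, e i) (∏ i ∈ s, f i) = ∏ i ∈ s, coeff (e i) (f i) := by
  induction s using Finset.cons_induction with
  | empty => simp
  | cons i s hi ih =>
    have hs : ∀ j ∈ s, ↑(f j).support ⊆ Set.Iic (e j) :=
      fun j hj => h j (Finset.mem_cons_of_mem hj)
    rw [Finset.prod_cons, Finset.sum_cons, Finset.prod_cons,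
      coeff_add_mul_of_support_subset_Iic (h i (Finset.mem_cons_self i s))
        (support_prod_subset_Iic s hs), ih hs]

theorem support_pow_subset_Iic (hp : ↑p.support ⊆ Set.Iic a) (k : ℕ) :
    ↑(p ^ k).support ⊆ Set.Iic (k • a) := by
  simpa using support_prod_subset_Iic (Finset.range k) fun _ _ => hp

theorem coeff_nsmul_pow_of_support_subset_Iic (hp : ↑p.support ⊆ Set.Iic a) (k : ℕ) :
    coeff (k • a) (p ^ k) = coeff a p ^ k := by
  simpa using coeff_sum_prod_of_support_subset_Iic (Finset.range k) fun _ _ => hp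

end TopExponent

section Translation

variable {σ R : Type*} [CommSemiring R]

theorem support_X_add_C_subset_Iic (i : σ) (c : R) :
    ↑(X i + C c : MvPolynomial σ R).support ⊆ Set.Iic (Finsupp.single i 1) := by
  classical
  have hX : (X i : MvPolynomial σ R).support ⊆ {Finsupp.single i 1} := support_monomial_subset
  have hC : (C c : MvPolynomial σ R).support ⊆ {0} := support_monomial_subset
  intro d hd
  rcases Finset.mem_union.mp (support_add hd) with h | h
  · exact (Finset.mem_singleton.mp (hX h)).le
  · exact (Finset.mem_singleton.mp (hC h)).trans_le zero_le

theorem coeff_single_X_add_C (i : σ) (c : R) :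
    coeff (Finsupp.single i 1) (X i + C c : MvPolynomial σ R) = 1 := by
  classical
  simp [coeff_C, (Finsupp.single_ne_zero.mpr one_ne_zero).symm]

theorem support_X_add_C_pow_subset_Iic (i : σ) (c : R) (k : ℕ) :
    ↑((X i + C c : MvPolynomial σ R) ^ k).support ⊆ Set.Iic (Finsupp.single i k) := by
  simpa [Finsupp.smul_single_one] using support_pow_subset_Iic (support_X_add_C_subset_Iic i c) k

theorem coeff_single_X_add_C_pow (i : σ) (c : R) (k : ℕ) :
    coeff (Finsupp.single i k) ((X i + C c : MvPolynomial σ R) ^ k) = 1 := by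
  have h := coeff_nsmul_pow_of_support_subset_Iic (support_X_add_C_subset_Iic i c) k
  rwa [coeff_single_X_add_C, one_pow, Finsupp.smul_single_one] at h

variable (q : σ → R)

theorem coeff_prod_X_add_C_pow_self (e : σ →₀ ℕ) :
    coeff e (∏ i ∈ e.support, (X i + C (q i)) ^ e i) = 1 := by
  have h := coeff_sum_prod_of_support_subset_Iic e.support
    fun i _ => support_X_add_C_pow_subset_Iic i (q i) (e i)
  rwa [show ∑ i ∈ e.support, Finsupp.single i (e i) = e from Finsupp.sum_single e,
    Finset.prod_eq_one fun i _ => coeff_single_X_add_C_pow i (q i) (e i)] at h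

theorem support_aeval_X_add_C_monomial_subset_Iic (e : σ →₀ ℕ) (r : R) :
    ↑(aeval (fun i => X i + C (q i)) (monomial e r)).support ⊆ Set.Iic e := by
  have hC : ↑(C r : MvPolynomial σ R).support ⊆ Set.Iic 0 :=
    fun d hd => Set.mem_Iic.mpr (Finset.mem_singleton.mp
      (support_monomial_subset (show d ∈ (monomial 0 r : MvPolynomial σ R).support from hd))).le
  have hprod := support_prod_subset_Iic e.support
    fun i _ => support_X_add_C_pow_subset_Iic i (q i) (e i)
  rw [show ∑ i ∈ e.support, Finsupp.single i (e i) = e from Finsupp.sum_single e] at hprod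
  rw [aeval_monomial, algebraMap_eq, Finsupp.prod]
  simpa only [zero_add] using support_mul_subset_Iic hC hprod

theorem coeff_aeval_X_add_C_monomial_self (e : σ →₀ ℕ) (r : R) :
    coeff e (aeval (fun i => X i + C (q i)) (monomial e r)) = r := by
  rw [aeval_monomial, algebraMap_eq, coeff_C_mul, Finsupp.prod, coeff_prod_X_add_C_pow_self,
    mul_one]

theorem coeff_aeval_X_add_C_of_maximal (f : MvPolynomial σ R) {d : σ →₀ ℕ}
    (hd : ∀ e ∈ f.support, d ≤ e → e = d) :
    coeff d (aeval (fun i => X i + C (q i)) f) = coeff d f := by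
  classical
  conv_lhs => rw [f.as_sum, map_sum, coeff_sum]
  refine (Finset.sum_eq_single d (fun e he hne => ?_) (fun hd' => ?_)).trans ?_
  · by_contra h
    exact hne (hd e he (support_aeval_X_add_C_monomial_subset_Iic q e _ (mem_support_iff.mpr h)))
  · rw [coeff_aeval_X_add_C_monomial_self, notMem_support_iff.mp hd']
  · exact coeff_aeval_X_add_C_monomial_self q d _

end Translation

theorem eval_T {p : ℕ} (Q : Fin p → ℝ) (f : MvPolynomial (Fin p) ℝ) (x : Fin p → ℝ) :
    eval x (T Q f) = eval (x + Q) f := by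
  change (aeval x).comp (aeval fun i => X i + C (Q i)) f = aeval (x + Q) f
  rw [comp_aeval]
  simp only [map_add, aeval_X, aeval_C, Algebra.algebraMap_self, RingHom.id_apply]
  rfl

theorem T_T_neg {p : ℕ} (P : Fin p → ℝ) (f : MvPolynomial (Fin p) ℝ) : T P (T (-P) f) = f := by
  have : (T P).comp (T (-P)) = AlgHom.id ℝ _ := algHom_ext fun i => by simp [T]
  exact DFunLike.congr_fun this f

theorem SSR_translate {n p : ℕ} (X : Fin n → Fin p → ℝ) (y : Fin n → ℝ) (P : Fin p → ℝ)
    (f : MvPolynomial (Fin p) ℝ) : SSR (fun j => X j + P) y f = SSR X y (T P f) := by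
  simp only [SSR, eval_T]

theorem penalized_minimizer_translation_general {n p : ℕ}
    (X : Fin n → Fin p → ℝ) (y : Fin n → ℝ)
    (g : ℝ → ℝ) (I : Set (Fin p →₀ ℕ)) (G : Set (Fin p →₀ ℕ))
    (PEN : (G → ℝ) → ℝ)
    (hGmax : ∀ d ∈ G, ∀ e ∈ I, d ≤ e → e = d)
    (F : Set (MvPolynomial (Fin p) ℝ))
    (hFI : F = {f | ↑f.support ⊆ I})
    (hFclosed : ∀ f ∈ F, ∀ Q : Fin p → ℝ, T Q f ∈ F)
    (fstar : MvPolynomial (Fin p) ℝ) (hfstar : fstar ∈ F)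
    (hmin : ∀ f ∈ F,
      g (SSR X y fstar) + PEN (fun d => coeff d.1 fstar) ≤
        g (SSR X y f) + PEN (fun d => coeff d.1 f))
    (P : Fin p → ℝ) :
    T (-P) fstar ∈ F ∧
    (∀ f ∈ F,
      g (SSR (fun j => X j + P) y (T (-P) fstar)) +
          PEN (fun d => coeff d.1 (T (-P) fstar)) ≤
        g (SSR (fun j => X j + P) y f) + PEN (fun d => coeff d.1 f)) ∧
    (∀ x : Fin p → ℝ, eval (x + P) (T (-P) fstar) = eval x fstar) := by
  have hpen : ∀ f ∈ F, ∀ Q : Fin p → ℝ,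
      (fun d : G => coeff d.1 (T Q f)) = fun d : G => coeff d.1 f := by
    intro f hf Q
    funext d
    subst hFI
    exact coeff_aeval_X_add_C_of_maximal Q f fun e he => hGmax d d.2 e (hf he)
  refine ⟨hFclosed fstar hfstar (-P), fun f hf => ?_, fun x => by simp [eval_T]⟩
  have h := hmin (T P f) (hFclosed f hf P)
  rw [hpen f hf P, ← SSR_translate] at h
  rwa [SSR_translate, T_T_neg, hpen fstar hfstar]

/-- If `f*` minimizes the penalized loss `g(SSR_{X,y}(·)) + PEN` (with penalty depending
only on coefficients indexed by a set `G` of maximal elements of the model support `I`)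
over the translation-closed family `F` of polynomials supported in `I`, then `T (-P) f*`
minimizes the loss for the translated data, and the fitted function is unchanged:
`(T (-P) f*)(x + P) = f*(x)` for all `x`. -/
theorem penalized_minimizer_translation {n p : ℕ}
    (X : Fin n → Fin p → ℝ) (y : Fin n → ℝ)
    (g : ℝ → ℝ) (I : Set (Fin p →₀ ℕ)) (G : Set (Fin p →₀ ℕ))
    (PEN : (G → ℝ) → ℝ)
    (hGI : G ⊆ I)
    (hGmax : ∀ d ∈ G, ∀ e ∈ I, d ≤ e → e = d)
    (F : Set (MvPolynomial (Fin p) ℝ))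
    (hFI : F = {f | ↑f.support ⊆ I})
    (hFclosed : ∀ f ∈ F, ∀ Q : Fin p → ℝ, T Q f ∈ F)
    (fstar : MvPolynomial (Fin p) ℝ) (hfstar : fstar ∈ F)
    (hmin : ∀ f ∈ F,
      g (SSR X y fstar) + PEN (fun d => coeff d.1 fstar) ≤
        g (SSR X y f) + PEN (fun d => coeff d.1 f))
    (P : Fin p → ℝ) :
    T (-P) fstar ∈ F ∧
    (∀ f ∈ F,
      g (SSR (fun j => X j + P) y (T (-P) fstar)) +
          PEN (fun d => coeff d.1 (T (-P) fstar)) ≤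
        g (SSR (fun j => X j + P) y f) + PEN (fun d => coeff d.1 f)) ∧
    (∀ x : Fin p → ℝ, eval (x + P) (T (-P) fstar) = eval x fstar) :=
  penalized_minimizer_translation_general X y g I G PEN hGmax F hFI hFclosed fstar hfstar hmin P
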